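/- arXiv:1411.6478 — 3 statements merged into one kernel-verified Lean document; each statement's English description precedes it below -/
import Mathlib

section
/- (Lemma 2, Propositions 1 and 2) In any execution of Algorithm 1, the successive values taken by the scalar logical clock total_i[i] at each process p_i are monotonically increasing, and the sequence of total_i[i] values included in the successive TOCOBC and CATCH_UP messages sent out by p_i is strictly increasing. -/
/-!
Operational model of Algorithm 1 (the `G`-fisheye (SC,CC)-broadcast algorithm).

`n` sequential asynchronous processes `p_0, …, p_{n-1}` (type `Fin n`) exchange
application messages of type `M` through reliable FIFO channels (one queue per
ordered pair of processes).  A proximity graph is a `SimpleGraph (Fin n)`.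
-/

namespace Fisheye

/-- A tuple `⟨m, s_caus, s_tot, sender⟩`, as carried by `TOCOBC` protocol
messages and as stored in the `pending` sets of Algorithm 1. -/
structure Tuple (n : ℕ) (M : Type) where
  msg : M
  scaus : Fin n → ℕ
  stot : ℕ
  sender : Fin n

/-- Protocol messages of Algorithm 1. -/
inductive PMsg (n : ℕ) (M : Type) where
  | tocobc (tp : Tuple n M)
  | catchup (d : ℕ) (sender : Fin n)

/-- Local state of a process: the vector clock `causal_i[1..n]`, the vector of
logical clock values `total_i[1..n]`, and the set `pending_i`. -/
structure ProcState (n : ℕ) (M : Type) where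
  causal : Fin n → ℕ
  total : Fin n → ℕ
  pending : Set (Tuple n M)

/-- Global configuration: local states plus channel contents.
`chan j i` is the FIFO queue of protocol messages in transit from `p_j`
to `p_i` (head = oldest message). -/
structure Config (n : ℕ) (M : Type) where
  proc : Fin n → ProcState n M
  chan : Fin n → Fin n → List (PMsg n M)

/-- Initially all clocks are `0`, all pending sets and channels are empty. -/
def initConfig (n : ℕ) (M : Type) : Config n M where
  proc := fun _ => { causal := fun _ => 0, total := fun _ => 0, pending := ∅ }
  chan := fun _ _ => []

/-- Lexicographic strict order on timestamps `⟨s_tot, sender⟩`. -/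
def tsLt {n : ℕ} (x y : ℕ × Fin n) : Prop :=
  x.1 < y.1 ∨ (x.1 = y.1 ∧ x.2 < y.2)

/-- Lexicographic (reflexive) order on timestamps. -/
def tsLe {n : ℕ} (x y : ℕ × Fin n) : Prop := tsLt x y ∨ x = y

/-- The set `C` at process `p_i`: pending tuples whose causal timestamp is
pointwise `≤ causal_i[·]`. -/
def inC {n : ℕ} {M : Type} (c : Config n M) (i : Fin n) (tp : Tuple n M) : Prop :=
  tp ∈ (c.proc i).pending ∧ ∀ k, tp.scaus k ≤ (c.proc i).causal k

/-- The set `T1` at `p_i`: tuples of `C` whose sender `p_j` satisfies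
`⟨total_i[k], k⟩ > ⟨s_tot, j⟩` for every neighbor `p_k` of `p_j` in `G`. -/
def inT1 {n : ℕ} {M : Type} (G : SimpleGraph (Fin n)) (c : Config n M) (i : Fin n)
    (tp : Tuple n M) : Prop :=
  inC c i tp ∧ ∀ k, G.Adj tp.sender k → tsLt (tp.stot, tp.sender) ((c.proc i).total k, k)

/-- The set `T2` at `p_i`: tuples of `T1` such that every pending tuple whose
sender is a neighbor of `p_j` has a (lexicographically) larger timestamp. -/
def inT2 {n : ℕ} {M : Type} (G : SimpleGraph (Fin n)) (c : Config n M) (i : Fin n)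
    (tp : Tuple n M) : Prop :=
  inT1 G c i tp ∧ ∀ tp' ∈ (c.proc i).pending, G.Adj tp.sender tp'.sender →
    tsLt (tp.stot, tp.sender) (tp'.stot, tp'.sender)

/-- Transition labels: `p_i` toco-broadcasts `m`; `p_i` receives the head
`TOCOBC` (resp. `CATCH_UP`) message of the channel from `p_j`; `p_i`
toco-delivers the message of the pending tuple `tp`. -/
inductive Label (n : ℕ) (M : Type) where
  | broadcast (i : Fin n) (m : M)
  | recvToco (i j : Fin n)
  | recvCatchup (i j : Fin n)
  | deliver (i : Fin n) (tp : Tuple n M)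

/-- The transition relation of Algorithm 1. -/
inductive Step {n : ℕ} {M : Type} (G : SimpleGraph (Fin n)) :
    Config n M → Label n M → Config n M → Prop
  /-- `TOCO_broadcast(m)` at `p_i`: increment `total_i[i]`, send
  `TOCOBC(m, ⟨causal_i[·], total_i[i], i⟩)` to every other process, add it to
  `pending_i`, and increment `causal_i[i]`. -/
  | broadcast (c : Config n M) (i : Fin n) (m : M) :
      Step G c (.broadcast i m)
        { proc := Function.update c.proc i
            { causal := Function.update (c.proc i).causal i ((c.proc i).causal i + 1)
              total := Function.update (c.proc i).total i ((c.proc i).total i + 1)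
              pending := insert ⟨m, (c.proc i).causal, (c.proc i).total i + 1, i⟩
                           (c.proc i).pending }
          chan := fun a b =>
            if a = i ∧ b ≠ i then
              c.chan a b ++ [PMsg.tocobc ⟨m, (c.proc i).causal, (c.proc i).total i + 1, i⟩]
            else c.chan a b }
  /-- Reception by `p_i` of the head `TOCOBC(m, ⟨s_caus, s_tot, sender⟩)` of the
  channel from `p_j`: add the tuple to `pending_i`, set `total_i[sender] := s_tot`,
  and if `total_i[i] ≤ s_tot`, set `total_i[i] := s_tot + 1` and send
  `CATCH_UP(total_i[i], i)` to every other process. -/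
  | recvToco (c : Config n M) (i j : Fin n) (tp : Tuple n M) (rest : List (PMsg n M))
      (hhead : c.chan j i = PMsg.tocobc tp :: rest) :
      Step G c (.recvToco i j)
        { proc := Function.update c.proc i
            { causal := (c.proc i).causal
              total :=
                if (c.proc i).total i ≤ tp.stot then
                  Function.update (Function.update (c.proc i).total tp.sender tp.stot) i
                    (tp.stot + 1)
                else Function.update (c.proc i).total tp.sender tp.stot
              pending := insert tp (c.proc i).pending }
          chan := fun a b =>
            if a = j ∧ b = i then rest
            else if (c.proc i).total i ≤ tp.stot ∧ a = i ∧ b ≠ i then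
              c.chan a b ++ [PMsg.catchup (tp.stot + 1) i]
            else c.chan a b }
  /-- Reception by `p_i` of the head `CATCH_UP(d, s)` of the channel from `p_j`:
  set `total_i[s] := d`. -/
  | recvCatchup (c : Config n M) (i j : Fin n) (d : ℕ) (s : Fin n) (rest : List (PMsg n M))
      (hhead : c.chan j i = PMsg.catchup d s :: rest) :
      Step G c (.recvCatchup i j)
        { proc := Function.update c.proc i
            { causal := (c.proc i).causal
              total := Function.update (c.proc i).total s d
              pending := (c.proc i).pending }
          chan := fun a b => if a = j ∧ b = i then rest else c.chan a b }
  /-- The background task at `p_i`: toco-deliver the message of a tuple of `T2`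
  with lexicographically minimal timestamp `⟨s_tot, sender⟩`, remove it from
  `pending_i`, and (if its sender is not `p_i`) increment `causal_i[sender]`. -/
  | deliver (c : Config n M) (i : Fin n) (tp : Tuple n M)
      (hT2 : inT2 G c i tp)
      (hmin : ∀ tp', inT2 G c i tp' → tsLe (tp.stot, tp.sender) (tp'.stot, tp'.sender)) :
      Step G c (.deliver i tp)
        { proc := Function.update c.proc i
            { causal :=
                if tp.sender = i then (c.proc i).causal
                else Function.update (c.proc i).causal tp.sender
                       ((c.proc i).causal tp.sender + 1)
              total := (c.proc i).total
              pending := (c.proc i).pending \ {tp} }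
          chan := c.chan }

/-- Either a stuttering step (no transition) or a step of Algorithm 1. -/
def OptStep {n : ℕ} {M : Type} (G : SimpleGraph (Fin n)) (c : Config n M) :
    Option (Label n M) → Config n M → Prop
  | none, c' => c' = c
  | some l, c' => Step G c l c'

/-- An execution of Algorithm 1: an infinite sequence of configurations starting
in the initial configuration, each obtained from the previous one by (at most)
one transition.  Toco-broadcast (application) messages are assumed unique: no
message is toco-broadcast twice. -/
structure Execution (n : ℕ) (M : Type) (G : SimpleGraph (Fin n)) where
  cfg : ℕ → Config n M
  lbl : ℕ → Option (Label n M)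
  init : cfg 0 = initConfig n M
  steps : ∀ t, OptStep G (cfg t) (lbl t) (cfg (t + 1))
  uniqueBcast : ∀ (m : M) (i i' : Fin n) (t t' : ℕ),
    lbl t = some (.broadcast i m) → lbl t' = some (.broadcast i' m) → t = t'

/-- `p_i` toco-broadcasts `m` at time `t`. -/
def Execution.broadcastsAt {n : ℕ} {M : Type} {G : SimpleGraph (Fin n)}
    (e : Execution n M G) (i : Fin n) (m : M) (t : ℕ) : Prop :=
  e.lbl t = some (.broadcast i m)

/-- `p_i` toco-delivers `m` at time `t`. -/
def Execution.deliversAt {n : ℕ} {M : Type} {G : SimpleGraph (Fin n)}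
    (e : Execution n M G) (i : Fin n) (m : M) (t : ℕ) : Prop :=
  ∃ tp : Tuple n M, tp.msg = m ∧ e.lbl t = some (.deliver i tp)

/-- The message causal order `⇝_M` of the execution: generated by (i) `m1`
toco-broadcast before `m2` by the same process, (ii) `m1` toco-delivered by a
process before that process toco-broadcasts `m2`, and transitivity. -/
inductive Execution.MsgCausal {n : ℕ} {M : Type} {G : SimpleGraph (Fin n)}
    (e : Execution n M G) : M → M → Prop
  | sameProc {i : Fin n} {m1 m2 : M} {t1 t2 : ℕ} :
      t1 < t2 → e.broadcastsAt i m1 t1 → e.broadcastsAt i m2 t2 → e.MsgCausal m1 m2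
  | delivered {i : Fin n} {m1 m2 : M} {t1 t2 : ℕ} :
      t1 < t2 → e.deliversAt i m1 t1 → e.broadcastsAt i m2 t2 → e.MsgCausal m1 m2
  | trans {m1 m2 m3 : M} : e.MsgCausal m1 m2 → e.MsgCausal m2 m3 → e.MsgCausal m1 m3

/-- The delivery condition of the background task of `p_i` is enabled. -/
def Deliverable {n : ℕ} {M : Type} (G : SimpleGraph (Fin n)) (e : Execution n M G)
    (i : Fin n) (t : ℕ) : Prop :=
  ∃ tp : Tuple n M, inT2 G (e.cfg t) i tp

/-- Fairness assumptions of the model: channels are reliable (a protocol message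
in transit is eventually received) and the background task of each process is
eventually executed whenever it stays enabled. -/
structure Fair {n : ℕ} {M : Type} {G : SimpleGraph (Fin n)} (e : Execution n M G) : Prop where
  recvFair : ∀ t (i j : Fin n), (e.cfg t).chan j i ≠ [] →
    ∃ t', t ≤ t' ∧ (e.lbl t' = some (.recvToco i j) ∨ e.lbl t' = some (.recvCatchup i j))
  deliverFair : ∀ t (i : Fin n), (∀ t', t ≤ t' → Deliverable G e i t') →
    ∃ t', t ≤ t' ∧ ∃ tp : Tuple n M, e.lbl t' = some (.deliver i tp)

end Fisheye

namespace Fisheye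

/-- `p_i` sends, at time `t`, a protocol message (`TOCOBC` or `CATCH_UP`)
containing the clock value `v = total_i[i]`.  This happens either when `p_i`
toco-broadcasts (the attached `s_tot` is the freshly incremented `total_i[i]`),
or when `p_i` receives a `TOCOBC` message whose timestamp `s_tot` satisfies
`total_i[i] ≤ s_tot`, in which case it sends `CATCH_UP(total_i[i], i)` with the
caught-up value `total_i[i] = s_tot + 1`.  In both cases the sent value is the
value of `total_i[i]` in the configuration after the step. -/
def sendsClockAt {n : ℕ} {M : Type} {G : SimpleGraph (Fin n)}
    (e : Execution n M G) (i : Fin n) (v : ℕ) (t : ℕ) : Prop :=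
  ((∃ m : M, e.lbl t = some (.broadcast i m)) ∨
   (∃ (j : Fin n) (tp : Tuple n M) (rest : List (PMsg n M)),
      e.lbl t = some (.recvToco i j) ∧
      (e.cfg t).chan j i = PMsg.tocobc tp :: rest ∧
      ((e.cfg t).proc i).total i ≤ tp.stot)) ∧
  v = ((e.cfg (t + 1)).proc i).total i

def PMsg.sender {n : ℕ} {M : Type} : PMsg n M → Fin n
  | .tocobc tp => tp.sender
  | .catchup _ s => s

def Config.ChannelSenders {n : ℕ} {M : Type} (c : Config n M) : Prop :=
  ∀ j i : Fin n, ∀ msg ∈ c.chan j i, msg.sender = j ∧ j ≠ i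

section

variable {n : ℕ} {M : Type} {G : SimpleGraph (Fin n)}

theorem Config.ChannelSenders.head_sender_ne {c : Config n M} (hc : c.ChannelSenders)
    {j i : Fin n} {msg : PMsg n M} {rest : List (PMsg n M)} (hhead : c.chan j i = msg :: rest) :
    msg.sender ≠ i := by
  obtain ⟨hsender, hne⟩ := hc j i msg (by simp [hhead])
  exact hsender ▸ hne

theorem Config.channelSenders_initConfig : (initConfig n M).ChannelSenders := by
  simp [Config.ChannelSenders, initConfig]

theorem Step.channelSenders {c c' : Config n M} {l : Label n M} (h : Step G c l c')
    (hc : c.ChannelSenders) : c'.ChannelSenders := by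
  intro a b msg hmsg
  cases h with
  | broadcast i m =>
    simp only at hmsg
    split_ifs at hmsg with hab
    · rw [List.mem_append, List.mem_singleton] at hmsg
      rcases hmsg with hold | rfl
      · exact hc a b msg hold
      · exact ⟨hab.1.symm, hab.1 ▸ hab.2.symm⟩
    · exact hc a b msg hmsg
  | recvToco i j tp rest hhead =>
    simp only at hmsg
    split_ifs at hmsg with hab hcatch
    · obtain ⟨rfl, rfl⟩ := hab
      exact hc a b msg (by simp [hhead, hmsg])
    · rw [List.mem_append, List.mem_singleton] at hmsg
      rcases hmsg with hold | rfl
      · exact hc a b msg hold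
      · exact ⟨hcatch.2.1.symm, hcatch.2.1 ▸ hcatch.2.2.symm⟩
    · exact hc a b msg hmsg
  | recvCatchup i j d s rest hhead =>
    simp only at hmsg
    split_ifs at hmsg with hab
    · obtain ⟨rfl, rfl⟩ := hab
      exact hc a b msg (by simp [hhead, hmsg])
    · exact hc a b msg hmsg
  | deliver i tp => exact hc a b msg hmsg

theorem Execution.cfg_induction (e : Execution n M G) (P : Config n M → Prop)
    (hinit : P (initConfig n M)) (hstep : ∀ c l c', Step G c l c' → P c → P c') :
    ∀ t, P (e.cfg t) := by
  intro t
  induction t with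
  | zero => exact e.init ▸ hinit
  | succ t ih =>
    have hs := e.steps t
    cases hl : e.lbl t with
    | none => simp only [hl, OptStep] at hs; exact hs ▸ ih
    | some l => simp only [hl, OptStep] at hs; exact hstep _ _ _ hs ih

theorem Execution.channelSenders (e : Execution n M G) (t : ℕ) : (e.cfg t).ChannelSenders :=
  e.cfg_induction _ Config.channelSenders_initConfig (fun _ _ _ h hc => h.channelSenders hc) t

theorem Execution.step_of_lbl (e : Execution n M G) {t : ℕ} {l : Label n M}
    (hl : e.lbl t = some l) : Step G (e.cfg t) l (e.cfg (t + 1)) := by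
  simpa only [hl, OptStep] using e.steps t

/-- A received `TOCOBC` or `CATCH_UP` updates the entry of its originator, which by the channel
invariant is never the receiver; only `p_i`'s own broadcast or catch-up touches `total_i[i]`. -/
theorem Step.total_self_le {c c' : Config n M} {l : Label n M} (h : Step G c l c')
    (hc : c.ChannelSenders) (i : Fin n) : (c.proc i).total i ≤ (c'.proc i).total i := by
  cases h with
  | recvToco k j tp rest hhead =>
    rcases eq_or_ne k i with rfl | hk
    · have hne : tp.sender ≠ k := hc.head_sender_ne hhead
      simp only [Function.update_self]
      split_ifs <;> simp [Function.update_of_ne hne.symm]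
      omega
    · simp [Function.update_of_ne hk.symm]
  | recvCatchup k j d s rest hhead =>
    rcases eq_or_ne k i with rfl | hk
    · have hne : s ≠ k := hc.head_sender_ne hhead
      simp [Function.update_of_ne hne.symm]
    · simp [Function.update_of_ne hk.symm]
  | broadcast k | deliver k =>
    rcases eq_or_ne k i with rfl | hk
    · simp
    · simp [Function.update_of_ne hk.symm]

theorem Execution.total_self_monotone (e : Execution n M G) (i : Fin n) :
    Monotone fun t => ((e.cfg t).proc i).total i := by
  refine monotone_nat_of_le_succ fun t => ?_
  cases hl : e.lbl t with
  | none =>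
    have hs := e.steps t
    simp only [hl, OptStep] at hs
    rw [hs]
  | some l => exact (e.step_of_lbl hl).total_self_le (e.channelSenders t) i

theorem Step.total_self_lt_of_broadcast {c c' : Config n M} {i : Fin n} {m : M}
    (h : Step G c (.broadcast i m) c') : (c.proc i).total i < (c'.proc i).total i := by
  cases h
  simp

theorem Step.total_self_lt_of_catchup {c c' : Config n M} {i j : Fin n} {tp : Tuple n M}
    {rest : List (PMsg n M)} (h : Step G c (.recvToco i j) c')
    (hhead : c.chan j i = PMsg.tocobc tp :: rest) (hle : (c.proc i).total i ≤ tp.stot) :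
    (c.proc i).total i < (c'.proc i).total i := by
  cases h with
  | recvToco _ _ tp' rest' hhead' =>
    obtain rfl : tp' = tp := by simp_all
    simp only [Function.update_self, if_pos hle]
    omega

theorem lt_of_sendsClockAt {e : Execution n M G} {i : Fin n} {v t : ℕ}
    (h : sendsClockAt e i v t) : ((e.cfg t).proc i).total i < v := by
  obtain ⟨⟨m, hl⟩ | ⟨j, tp, rest, hl, hhead, hle⟩, rfl⟩ := h
  · exact (e.step_of_lbl hl).total_self_lt_of_broadcast
  · exact (e.step_of_lbl hl).total_self_lt_of_catchup hhead hle

end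

/-- **Lemma 2, Propositions 1 and 2.**  In any execution of Algorithm 1, the
successive values of the scalar logical clock `total_i[i]` at each process
`p_i` are monotonically increasing, and the sequence of `total_i[i]` values
included in the successive `TOCOBC` and `CATCH_UP` messages sent out by `p_i`
is strictly increasing. -/
theorem total_ii_monotone_and_sent_strict {n : ℕ} {M : Type}
    {G : SimpleGraph (Fin n)} (e : Execution n M G) (i : Fin n) :
    (∀ t t' : ℕ, t ≤ t' → ((e.cfg t).proc i).total i ≤ ((e.cfg t').proc i).total i) ∧
    (∀ (t1 t2 : ℕ) (v1 v2 : ℕ), t1 < t2 →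
      sendsClockAt e i v1 t1 → sendsClockAt e i v2 t2 → v1 < v2) := by
  refine ⟨fun t t' => (e.total_self_monotone i ·), fun t1 t2 v1 v2 hlt h1 h2 => ?_⟩
  calc v1 = ((e.cfg (t1 + 1)).proc i).total i := h1.2
    _ ≤ ((e.cfg t2).proc i).total i := e.total_self_monotone i hlt
    _ < v2 := lt_of_sendsClockAt h2

end Fisheye
end

section
/- (Lemma 3) In any execution of Algorithm 1, the following invariant holds: for any two distinct processes p_i ≠ p_j and any message m toco-broadcast by p_j with attached causal vector s_caus_j^m[·], at every point of p_i's execution outside the delivery step (i.e., outside the instant between toco-delivering a message and the subsequent increment of causal_i), one has s_caus_j^m[j] < causal_i[j] if and only if p_i has already toco-delivered m. -/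
/-!
For `p_i ≠ p_j`, the entry `causal_i[j]` changes only when `p_i` delivers a tuple sent by `p_j`,
and then grows by one. Induct on time. When `p_i` delivers the tuple of some message `m'` of `p_j`,
that tuple is pending, hence not yet delivered, so the induction hypothesis together with the
membership of the tuple in `C` pins `causal_i[j]` to exactly `s_caus^{m'}[j]`; and since
`causal_j[j]` strictly increases at each broadcast of `p_j`, the values `s_caus^{m}[j]` tell the
messages of `p_j` apart.

That a pending tuple was never delivered before is a counting argument: at each process, the
copies of a tuple (in transit towards it, pending at it, or already delivered by it) never
outnumber the broadcasts creating that tuple, and there is at most one such broadcast since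
messages are broadcast only once.
-/

namespace Fisheye

open Finset Classical

variable {n : ℕ} {M : Type} {G : SimpleGraph (Fin n)}

theorem sum_add_boole_eq {ι : Type*} [Fintype ι] [DecidableEq ι] {f g : ι → ℕ} (a₀ : ι)
    (P : Prop) [Decidable P] (h : ∀ a, f a + (if a = a₀ ∧ P then 1 else 0) = g a) :
    ∑ a, f a + (if P then 1 else 0) = ∑ a, g a := by
  simp_rw [← h, sum_add_distrib, ite_and, sum_ite_eq', mem_univ, if_true]

def Config.bcastTuple (c : Config n M) (i : Fin n) (m : M) : Tuple n M :=
  ⟨m, (c.proc i).causal, (c.proc i).total i + 1, i⟩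

noncomputable def Config.inTransit (c : Config n M) (i : Fin n) (tp : Tuple n M) : ℕ :=
  ∑ a, (c.chan a i).count (.tocobc tp)

noncomputable def Config.copies (c : Config n M) (i : Fin n) (tp : Tuple n M) : ℕ :=
  c.inTransit i tp + if tp ∈ (c.proc i).pending then 1 else 0

section Step

variable {c c' : Config n M} {l : Label n M} {i p k : Fin n} {tp : Tuple n M}

theorem Step.copies_le_of_broadcast {i₀ : Fin n} {m : M} (h : Step G c (.broadcast i₀ m) c') :
    c'.copies i tp ≤ c.copies i tp + if c.bcastTuple i₀ m = tp then 1 else 0 := by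
  cases h
  have hchan : ∀ a, (c.chan a i).count (.tocobc tp) +
      (if a = i₀ ∧ (i ≠ i₀ ∧ c.bcastTuple i₀ m = tp) then 1 else 0) =
        (if a = i₀ ∧ i ≠ i₀ then
          c.chan a i ++ [PMsg.tocobc (c.bcastTuple i₀ m)] else c.chan a i).count (.tocobc tp) := by
    intro a
    split_ifs <;> simp_all [List.count_append]
  simp only [Config.copies, Config.inTransit]
  erw [← sum_add_boole_eq i₀ _ hchan]
  clear hchan
  by_cases htp : c.bcastTuple i₀ m = tp
  · subst htp
    by_cases hi : i = i₀
    · subst hi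
      simp [Config.bcastTuple]
    · simp [hi]
      omega
  · by_cases hi : i = i₀
    · subst hi
      rw [Config.bcastTuple] at htp
      simp [Ne.symm htp]
    · simp [htp, hi]

-- Only `≤`: the received copy may merge with an equal tuple already in the set `pending`.
theorem Step.copies_le_of_recvToco {i₀ j₀ : Fin n} (h : Step G c (.recvToco i₀ j₀) c') :
    c'.copies i tp ≤ c.copies i tp := by
  cases h with
  | recvToco _ _ tp₀ rest hhead =>
    have hchan : ∀ a, (if a = j₀ ∧ i = i₀ then rest
          else if (c.proc i₀).total i₀ ≤ tp₀.stot ∧ a = i₀ ∧ i ≠ i₀ then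
            c.chan a i ++ [PMsg.catchup (tp₀.stot + 1) i₀] else c.chan a i).count (.tocobc tp) +
        (if a = j₀ ∧ (i = i₀ ∧ tp₀ = tp) then 1 else 0) = (c.chan a i).count (.tocobc tp) := by
      intro a
      split_ifs <;> simp_all [List.count_append]
    simp only [Config.copies, Config.inTransit]
    rw [← sum_add_boole_eq j₀ _ hchan]
    clear hchan
    by_cases hi : i = i₀
    · subst hi
      simp only [true_and, and_true]
      split_ifs <;> grind
    · simp [hi]

theorem Step.copies_eq_of_recvCatchup {i₀ j₀ : Fin n} (h : Step G c (.recvCatchup i₀ j₀) c') :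
    c'.copies i tp = c.copies i tp := by
  cases h with
  | recvCatchup _ _ _ _ rest hhead =>
    have hchan : ∀ a, (if a = j₀ ∧ i = i₀ then rest else c.chan a i).count (.tocobc tp) =
        (c.chan a i).count (.tocobc tp) := by
      intro a
      split_ifs <;> simp_all
    simp only [Config.copies, Config.inTransit, hchan]
    by_cases hi : i = i₀
    · subst hi
      simp
    · simp [hi]

theorem Step.copies_add_eq_of_deliver {i₀ : Fin n} {tp₀ : Tuple n M}
    (h : Step G c (.deliver i₀ tp₀) c') :
    c'.copies i tp + (if i₀ = i ∧ tp₀ = tp then 1 else 0) = c.copies i tp := by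
  cases h with
  | deliver _ _ hT2 _ =>
    have hmem : tp₀ ∈ (c.proc i₀).pending := hT2.1.1.1
    by_cases hi : i = i₀
    · subst hi
      simp only [Config.copies, Config.inTransit, Function.update_self, Set.mem_sdiff,
        Set.mem_singleton_iff, true_and]
      split_ifs <;> grind
    · simp [Config.copies, Config.inTransit, hi, Ne.symm hi]

theorem Step.inC_of_deliver (h : Step G c (.deliver i tp) c') : inC c i tp := by
  cases h with
  | deliver _ _ hT2 _ => exact hT2.1.1

theorem Step.causal_self (h : Step G c l c') (p : Fin n) :
    (c'.proc p).causal p = (c.proc p).causal p + if ∃ m, l = .broadcast p m then 1 else 0 := by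
  cases h with
  | broadcast i₀ => by_cases hp : p = i₀ <;> simp [hp, eq_comm]
  | deliver i₀ => by_cases hp : p = i₀ <;> simp [hp]; grind
  | _ i₀ => by_cases hp : p = i₀ <;> simp [hp]

theorem Step.causal_of_ne (h : Step G c l c') (hpk : p ≠ k) :
    (c'.proc p).causal k =
      (c.proc p).causal k + if ∃ tp : Tuple n M, tp.sender = k ∧ l = .deliver p tp then 1 else 0 := by
  cases h with
  | broadcast i₀ => by_cases hp : p = i₀ <;> simp [hp]; grind
  | deliver i₀ => by_cases hp : p = i₀ <;> simp [hp] <;> grind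
  | _ i₀ => by_cases hp : p = i₀ <;> simp [hp]

end Step

theorem initConfig_copies (i : Fin n) (tp : Tuple n M) : (initConfig n M).copies i tp = 0 := by
  simp [initConfig, Config.copies, Config.inTransit]

namespace Execution

variable {e : Execution n M G} {i j : Fin n} {tp tp' : Tuple n M} {m m' : M} {t t' tb tb' : ℕ}

theorem step_of_lbl_eq_some {l : Label n M} (h : e.lbl t = some l) :
    Step G (e.cfg t) l (e.cfg (t + 1)) := by
  simpa [h, OptStep] using e.steps t

theorem cfg_succ_of_lbl_eq_none (h : e.lbl t = none) : e.cfg (t + 1) = e.cfg t := by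
  simpa [h, OptStep] using e.steps t

def Creates (e : Execution n M G) (t : ℕ) (tp : Tuple n M) : Prop :=
  ∃ i m, e.lbl t = some (.broadcast i m) ∧ (e.cfg t).bcastTuple i m = tp

noncomputable def copyCount (e : Execution n M G) (i : Fin n) (tp : Tuple n M) (t : ℕ) : ℕ :=
  (e.cfg t).copies i tp + ∑ t' ∈ range t, if e.lbl t' = some (.deliver i tp) then 1 else 0

theorem copyCount_succ_le :
    e.copyCount i tp (t + 1) ≤ e.copyCount i tp t + if e.Creates t tp then 1 else 0 := by
  simp only [copyCount, sum_range_succ]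
  cases hl : e.lbl t with
  | none => simp [cfg_succ_of_lbl_eq_none hl, Creates, hl]
  | some l =>
    have hs := step_of_lbl_eq_some hl
    cases l with
    | broadcast => have := hs.copies_le_of_broadcast (i := i) (tp := tp); simp [Creates, hl]; omega
    | recvToco => have := hs.copies_le_of_recvToco (i := i) (tp := tp); simp [Creates, hl]; omega
    | recvCatchup => have := hs.copies_eq_of_recvCatchup (i := i) (tp := tp); simp [Creates, hl]; omega
    | deliver => have := hs.copies_add_eq_of_deliver (i := i) (tp := tp); simp [Creates, hl]; omega

theorem copyCount_le_creations :
    e.copyCount i tp t ≤ ∑ t' ∈ range t, if e.Creates t' tp then 1 else 0 := by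
  induction t with
  | zero => simp [copyCount, e.init, initConfig_copies]
  | succ t ih =>
    rw [sum_range_succ]
    exact copyCount_succ_le.trans (by omega)

theorem Creates.broadcastsAt (h : e.Creates t tp) : e.broadcastsAt tp.sender tp.msg t := by
  obtain ⟨i, m, hl, rfl⟩ := h
  exact hl

theorem Creates.scaus_eq (h : e.Creates t tp) : tp.scaus = ((e.cfg t).proc tp.sender).causal := by
  obtain ⟨i, m, -, rfl⟩ := h
  rfl

theorem Creates.eq_of_msg_eq (h : e.Creates t tp) (h' : e.Creates t' tp') (hm : tp.msg = tp'.msg) :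
    t = t' ∧ tp = tp' := by
  obtain ⟨i, m, hl, rfl⟩ := h
  obtain ⟨i', m', hl', rfl⟩ := h'
  obtain rfl : m = m' := hm
  obtain rfl := e.uniqueBcast m i i' t t' hl hl'
  obtain rfl : i = i' := by simpa [hl] using hl'
  exact ⟨rfl, rfl⟩

theorem creations_le_one : (∑ t' ∈ range t, if e.Creates t' tp then 1 else 0) ≤ 1 := by
  rw [sum_boole, Nat.cast_id, card_le_one]
  intro t₁ h₁ t₂ h₂
  exact ((mem_filter.1 h₁).2.eq_of_msg_eq (mem_filter.1 h₂).2 rfl).1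

theorem copyCount_le_one : e.copyCount i tp t ≤ 1 :=
  copyCount_le_creations.trans creations_le_one

theorem exists_creates_of_mem_pending (h : tp ∈ ((e.cfg t).proc i).pending) :
    ∃ tb < t, e.Creates tb tp := by
  have hpos : 0 < ∑ t' ∈ range t, if e.Creates t' tp then 1 else 0 :=
    lt_of_lt_of_le (by simp [copyCount, Config.copies, h]) (copyCount_le_creations (i := i))
  obtain ⟨tb, hmem, hne⟩ := exists_ne_zero_of_sum_ne_zero hpos.ne'
  exact ⟨tb, mem_range.1 hmem, by simpa using hne⟩

theorem inC_of_deliver (h : e.lbl t = some (.deliver i tp)) : inC (e.cfg t) i tp :=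
  (step_of_lbl_eq_some h).inC_of_deliver

theorem exists_creates_of_deliver (h : e.lbl t = some (.deliver i tp)) :
    ∃ tb < t, e.Creates tb tp :=
  exists_creates_of_mem_pending (inC_of_deliver h).1

theorem not_deliversAt_of_deliver (h : e.lbl t = some (.deliver i tp)) (ht : t' < t) :
    ¬ e.deliversAt i tp.msg t' := by
  rintro ⟨tp', hm, h'⟩
  obtain ⟨_, -, hcr⟩ := exists_creates_of_deliver h
  obtain ⟨_, -, hcr'⟩ := exists_creates_of_deliver h'
  obtain rfl := (hcr'.eq_of_msg_eq hcr hm).2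
  have hpend : tp' ∈ ((e.cfg t).proc i).pending := (inC_of_deliver h).1
  have : 2 ≤ e.copyCount i tp' t := by
    have hdel : 1 ≤ ∑ s ∈ range t, if e.lbl s = some (.deliver i tp') then 1 else 0 :=
      le_trans (by simp [h']) (single_le_sum (by simp) (mem_range.2 ht))
    simp only [copyCount, Config.copies, hpend, if_true]
    omega
  have := copyCount_le_one (e := e) (i := i) (tp := tp') (t := t)
  omega

theorem causal_self_succ (t : ℕ) (j : Fin n) :
    ((e.cfg (t + 1)).proc j).causal j =
      ((e.cfg t).proc j).causal j + if ∃ m, e.lbl t = some (.broadcast j m) then 1 else 0 := by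
  cases hl : e.lbl t with
  | none => simp [cfg_succ_of_lbl_eq_none hl]
  | some l => simpa using (step_of_lbl_eq_some hl).causal_self j

theorem causal_succ_of_ne (t : ℕ) (hij : i ≠ j) :
    ((e.cfg (t + 1)).proc i).causal j = ((e.cfg t).proc i).causal j +
      if ∃ tp : Tuple n M, tp.sender = j ∧ e.lbl t = some (.deliver i tp) then 1 else 0 := by
  cases hl : e.lbl t with
  | none => simp [cfg_succ_of_lbl_eq_none hl]
  | some l => simpa using (step_of_lbl_eq_some hl).causal_of_ne hij

theorem causal_self_lt_of_broadcastsAt (hb : e.broadcastsAt j m tb) (h : tb < t) :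
    ((e.cfg tb).proc j).causal j < ((e.cfg t).proc j).causal j := by
  have hmono : Monotone fun s => ((e.cfg s).proc j).causal j :=
    monotone_nat_of_le_succ fun s => by rw [causal_self_succ]; omega
  calc ((e.cfg tb).proc j).causal j
      < ((e.cfg (tb + 1)).proc j).causal j := by
        rw [causal_self_succ, if_pos ⟨m, hb⟩]; omega
    _ ≤ ((e.cfg t).proc j).causal j := hmono h

theorem causal_self_eq_iff (hb : e.broadcastsAt j m tb) (hb' : e.broadcastsAt j m' tb') :
    ((e.cfg tb).proc j).causal j = ((e.cfg tb').proc j).causal j ↔ m = m' := by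
  constructor
  · intro h
    obtain rfl : tb = tb' := by
      by_contra hne
      rcases lt_or_gt_of_ne hne with hlt | hlt
      · exact (causal_self_lt_of_broadcastsAt hb hlt).ne h
      · exact (causal_self_lt_of_broadcastsAt hb' hlt).ne' h
    simpa using (hb : e.lbl tb = _).symm.trans hb'
  · rintro rfl
    rw [e.uniqueBcast m j j tb tb' hb hb']

theorem sender_eq_of_deliver (hb : e.broadcastsAt j tp.msg tb)
    (hd : e.lbl t = some (.deliver i tp)) : tp.sender = j := by
  obtain ⟨tb', -, hcr⟩ := exists_creates_of_deliver hd
  have hb' := hcr.broadcastsAt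
  obtain rfl := e.uniqueBcast tp.msg _ _ tb' tb hb' hb
  simpa using (hb' : e.lbl tb' = _).symm.trans hb

def CausalRecordsDeliveries (e : Execution n M G) (i j : Fin n) (t : ℕ) : Prop :=
  ∀ tb m, e.broadcastsAt j m tb →
    (((e.cfg tb).proc j).causal j < ((e.cfg t).proc i).causal j ↔ ∃ t' < t, e.deliversAt i m t')

theorem causalRecordsDeliveries_zero : e.CausalRecordsDeliveries i j 0 := by
  simp [CausalRecordsDeliveries, e.init, initConfig]

theorem CausalRecordsDeliveries.causal_eq_of_deliver (h : e.CausalRecordsDeliveries i tp.sender t)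
    (hcr : e.Creates tb tp) (hd : e.lbl t = some (.deliver i tp)) :
    ((e.cfg t).proc i).causal tp.sender = ((e.cfg tb).proc tp.sender).causal tp.sender := by
  apply le_antisymm
  · rw [← not_lt, h tb tp.msg hcr.broadcastsAt]
    exact fun ⟨t', ht', hdel⟩ => not_deliversAt_of_deliver hd ht' hdel
  · simpa [hcr.scaus_eq] using (inC_of_deliver hd).2 tp.sender

theorem CausalRecordsDeliveries.succ (hij : i ≠ j) (h : e.CausalRecordsDeliveries i j t) :
    e.CausalRecordsDeliveries i j (t + 1) := by
  intro tb m hb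
  rw [Nat.exists_lt_succ_right, ← h tb m hb, causal_succ_of_ne t hij]
  by_cases hd : ∃ tp : Tuple n M, tp.sender = j ∧ e.lbl t = some (.deliver i tp)
  · obtain ⟨tp, rfl, hd⟩ := hd
    obtain ⟨tb', -, hcr⟩ := exists_creates_of_deliver hd
    have hdel : e.deliversAt i m t ↔ tp.msg = m :=
      ⟨fun ⟨tp', hm, hd'⟩ => by simp_all, fun hm => ⟨tp, hm, hd⟩⟩
    rw [if_pos ⟨tp, rfl, hd⟩, h.causal_eq_of_deliver hcr hd, hdel, Nat.lt_succ_iff,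
      le_iff_lt_or_eq, causal_self_eq_iff hb hcr.broadcastsAt, eq_comm]
  · have : ¬ e.deliversAt i m t := fun ⟨tp, hm, hd'⟩ =>
      hd ⟨tp, sender_eq_of_deliver (hm ▸ hb) hd', hd'⟩
    simp [hd, this]

theorem causalRecordsDeliveries (hij : i ≠ j) (t : ℕ) : e.CausalRecordsDeliveries i j t := by
  induction t with
  | zero => exact causalRecordsDeliveries_zero
  | succ t ih => exact ih.succ hij

end Execution

/-- **Lemma 3.**  In any execution of Algorithm 1, for any two distinct
processes `p_i ≠ p_j` and any message `m` toco-broadcast by `p_j` (at time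
`tb`, hence with attached causal vector `s_caus_j^m[·] = causal_j[·]` of
configuration `cfg tb`), at every point `t` of the execution (all configurations
lie outside the atomic delivery step), `s_caus_j^m[j] < causal_i[j]` iff `p_i`
has already toco-delivered `m`. -/
theorem scaus_lt_causal_iff_delivered {n : ℕ} {M : Type} {G : SimpleGraph (Fin n)}
    (e : Execution n M G) :
    ∀ (i j : Fin n), i ≠ j → ∀ (tb : ℕ) (m : M), e.broadcastsAt j m tb →
      ∀ t : ℕ,
        (((e.cfg tb).proc j).causal j < ((e.cfg t).proc i).causal j ↔
          ∃ t', t' < t ∧ e.deliversAt i m t') :=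
  fun _ _ hij tb m hb t => Execution.causalRecordsDeliveries hij t tb m hb

end Fisheye
end

section
/- (Clique instantiation of the broadcast) If the proximity graph G is fully connected (an edge between every pair of distinct processes), then the specification of the G-fisheye (SC,CC)-broadcast is equivalent to total-order broadcast respecting causal order: any two messages toco-broadcast by distinct processes are toco-delivered in the same relative order by all processes, messages from the same process are delivered in causal (hence sending) order, and Validity, Integrity, and Termination hold. -/
/-!
Abstract broadcast executions and the specification of the `G`-fisheye
(SC,CC)-broadcast, instantiated for particular proximity graphs `G`.
-/

namespace FisheyeSpec

/-- An abstract broadcast execution over processes of type `P` and messages of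
type `M`: `bcastAt p m t` means that process `p` toco-broadcasts message `m` at
time `t`, and `delivAt p m t` means that process `p` toco-delivers `m` at time
`t`.  The model well-formedness conditions state that each message is
toco-broadcast at most once (messages are unique) and that a message can only
be toco-delivered strictly after it has been toco-broadcast. -/
structure BcastExec (P M : Type) where
  bcastAt : P → M → ℕ → Prop
  delivAt : P → M → ℕ → Prop
  uniqueBcast : ∀ (p p' : P) (m : M) (t t' : ℕ),
    bcastAt p m t → bcastAt p' m t' → p = p' ∧ t = t'
  delivAfterBcast : ∀ (p : P) (m : M) (t : ℕ),
    delivAt p m t → ∃ (q : P) (t' : ℕ), t' < t ∧ bcastAt q m t'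

variable {P M : Type}

/-- The message causal order `⇝_M`: the least transitive relation on
toco-broadcast messages such that `m1 ⇝_M m2` whenever `m1` and `m2` were
toco-broadcast by the same process with `m1` first, or `m1` was toco-delivered
by some process before that process toco-broadcast `m2`. -/
inductive MsgCausal (E : BcastExec P M) : M → M → Prop
  | sameProc {p : P} {m1 m2 : M} {t1 t2 : ℕ} :
      t1 < t2 → E.bcastAt p m1 t1 → E.bcastAt p m2 t2 → MsgCausal E m1 m2
  | delivered {p : P} {m1 m2 : M} {t1 t2 : ℕ} :
      t1 < t2 → E.delivAt p m1 t1 → E.bcastAt p m2 t2 → MsgCausal E m1 m2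
  | trans {m1 m2 m3 : M} : MsgCausal E m1 m2 → MsgCausal E m2 m3 → MsgCausal E m1 m3

/-- Validity: every toco-delivered message was toco-broadcast by some process. -/
def Validity (E : BcastExec P M) : Prop :=
  ∀ (p : P) (m : M) (t : ℕ), E.delivAt p m t → ∃ (q : P) (t' : ℕ), E.bcastAt q m t'

/-- Integrity: a message is toco-delivered at most once by each process. -/
def Integrity (E : BcastExec P M) : Prop :=
  ∀ (p : P) (m : M) (t t' : ℕ), E.delivAt p m t → E.delivAt p m t' → t = t'

/-- `G`-delivery order: for every edge `(p,q)` of `G` and all messages `m_p`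
toco-broadcast by `p` and `m_q` toco-broadcast by `q`, if a process
toco-delivers `m_p` before `m_q`, then no process toco-delivers `m_q` before
`m_p`. -/
def GDelivOrder (G : SimpleGraph P) (E : BcastExec P M) : Prop :=
  ∀ p q : P, G.Adj p q → ∀ (mp mq : M) (tp tq : ℕ),
    E.bcastAt p mp tp → E.bcastAt q mq tq →
    (∃ (r : P) (t1 t2 : ℕ), t1 < t2 ∧ E.delivAt r mp t1 ∧ E.delivAt r mq t2) →
    ¬ ∃ (r : P) (t1 t2 : ℕ), t1 < t2 ∧ E.delivAt r mq t1 ∧ E.delivAt r mp t2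

/-- Causal order: if `m1 ⇝_M m2`, no process toco-delivers `m2` before `m1`. -/
def CausalDelivOrder (E : BcastExec P M) : Prop :=
  ∀ m1 m2 : M, MsgCausal E m1 m2 →
    ¬ ∃ (r : P) (t1 t2 : ℕ), t1 < t2 ∧ E.delivAt r m2 t1 ∧ E.delivAt r m1 t2

/-- Termination: every toco-broadcast message is toco-delivered by all
processes. -/
def Termination (E : BcastExec P M) : Prop :=
  ∀ (p : P) (m : M) (t : ℕ), E.bcastAt p m t → ∀ q : P, ∃ t', E.delivAt q m t'

/-- The specification of the `G`-fisheye (SC,CC)-broadcast. -/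
def SCCCBroadcastSpec (G : SimpleGraph P) (E : BcastExec P M) : Prop :=
  Validity E ∧ Integrity E ∧ GDelivOrder G E ∧ CausalDelivOrder E ∧ Termination E

/-- The specification of causal-order broadcast: Validity, Integrity, Causal
order, and Termination. -/
def CausalBcastSpec (E : BcastExec P M) : Prop :=
  Validity E ∧ Integrity E ∧ CausalDelivOrder E ∧ Termination E

/-- Total-order delivery for messages toco-broadcast by distinct processes:
any two such messages are toco-delivered in the same relative order by all
processes. -/
def SameRelativeOrder (E : BcastExec P M) : Prop :=
  ∀ (p q : P) (mp mq : M) (tp tq : ℕ), p ≠ q →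
    E.bcastAt p mp tp → E.bcastAt q mq tq →
    (∃ (r : P) (t1 t2 : ℕ), t1 < t2 ∧ E.delivAt r mp t1 ∧ E.delivAt r mq t2) →
    ¬ ∃ (r : P) (t1 t2 : ℕ), t1 < t2 ∧ E.delivAt r mq t1 ∧ E.delivAt r mp t2

/-- Messages toco-broadcast by the same process are toco-delivered in their
causal — hence sending — order: no process delivers the later one first. -/
def SendingOrder (E : BcastExec P M) : Prop :=
  ∀ (p : P) (m1 m2 : M) (t1 t2 : ℕ), t1 < t2 →
    E.bcastAt p m1 t1 → E.bcastAt p m2 t2 →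
    ¬ ∃ (r : P) (t1' t2' : ℕ), t1' < t2' ∧ E.delivAt r m2 t1' ∧ E.delivAt r m1 t2'

end FisheyeSpec

namespace FisheyeSpec

/-- The second message of a causal pair was toco-broadcast. -/
lemma MsgCausal.bcast_right {P M : Type} {E : BcastExec P M} {m1 m2 : M}
    (h : MsgCausal E m1 m2) : ∃ p t, E.bcastAt p m2 t := by
  induction h with
  | sameProc _ _ hb => exact ⟨_, _, hb⟩
  | delivered _ _ hb => exact ⟨_, _, hb⟩
  | trans _ _ _ ih => exact ih

/-- **Clique instantiation of the broadcast.**  If the proximity graph `G` is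
fully connected (an edge between every pair of distinct processes), then the
specification of the `G`-fisheye (SC,CC)-broadcast is equivalent to total-order
broadcast respecting causal order: any two messages toco-broadcast by distinct
processes are toco-delivered in the same relative order by all processes,
messages from the same process are delivered in causal (hence sending) order,
and Validity, Integrity, and Termination hold. -/
theorem clique_scccbroadcast_iff_total_order {P M : Type} (G : SimpleGraph P)
    (hG : ∀ p q : P, p ≠ q → G.Adj p q) (E : BcastExec P M) :
    SCCCBroadcastSpec G E ↔
      Validity E ∧ Integrity E ∧ Termination E ∧
      SameRelativeOrder E ∧ SendingOrder E := by
  constructor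
  · rintro ⟨hV, hI, hGd, hC, hT⟩
    refine ⟨hV, hI, hT, ?_, ?_⟩
    · intro p q mp mq tp tq hpq hbp hbq h1
      exact hGd p q (hG p q hpq) mp mq tp tq hbp hbq h1
    · intro p m1 m2 t1 t2 ht hb1 hb2
      exact hC m1 m2 (MsgCausal.sameProc ht hb1 hb2)
  · rintro ⟨hV, hI, hT, hS, hSend⟩
    have hC : CausalDelivOrder E := by
      intro m1 m2 h
      induction h with
      | @sameProc p m1 m2 t1 t2 ht hb1 hb2 =>
        exact hSend p m1 m2 t1 t2 ht hb1 hb2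
      | @delivered p m1 m2 t1 t2 ht hd1 hb2 =>
        obtain ⟨q, t', ht', hb1⟩ := E.delivAfterBcast p m1 t1 hd1
        by_cases hqp : q = (p : P)
        · subst hqp
          exact hSend q m1 m2 t' t2 (ht'.trans ht) hb1 hb2
        · refine hS q p m1 m2 t' t2 hqp hb1 hb2 ?_
          obtain ⟨s, hd2⟩ := hT p m2 t2 hb2 p
          obtain ⟨q', t'', ht'', hb2'⟩ := E.delivAfterBcast p m2 s hd2
          obtain ⟨_, hteq⟩ := E.uniqueBcast q' p m2 t'' t2 hb2' hb2
          exact ⟨p, t1, s, ht.trans (hteq ▸ ht''), hd1, hd2⟩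
      | @trans m1 m2 m3 h12 h23 ih12 ih23 =>
        rintro ⟨r, t1, t2, ht, hd3, hd1⟩
        obtain ⟨q2, s2, hb2⟩ := h12.bcast_right
        obtain ⟨s, hd2⟩ := hT q2 m2 s2 hb2 r
        rcases lt_or_ge t1 s with hlt | hle
        · exact ih23 ⟨r, t1, s, hlt, hd3, hd2⟩
        · exact ih12 ⟨r, s, t2, lt_of_le_of_lt hle ht, hd2, hd1⟩
    refine ⟨hV, hI, ?_, hC, hT⟩
    intro p q hadj mp mq tp tq hbp hbq h1
    exact hS p q mp mq tp tq hadj.ne hbp hbq h1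

end FisheyeSpec
end
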